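/- Size of the UL-image: with notation as above over R = K[X]/(X^m), K finite of size q, the set 𝓗 = {U·L : U invertible upper triangular, L invertible lower triangular} satisfies |𝓗| = |𝓤|·|𝓛|/|𝓓| and |𝓗| / |Mₙ(R)| = (1 − 1/q)ⁿ. -/

import Mathlib

/-!
If `U₁ L₁ = U₂ L₂` with `Uᵢ` invertible upper and `Lᵢ` invertible lower triangular, then
`U₂⁻¹ U₁ = L₂ L₁⁻¹` is both upper and lower triangular, hence diagonal. So the fibres of
`(U, L) ↦ U L` are the orbits of the invertible diagonal matrices `D` acting by
`(U, L) ↦ (U D⁻¹, D L)`, and `(U, L) ↦ (U L, diag L)` is a bijection `𝓤 × 𝓛 ≃ 𝓗 × 𝓓`.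
A triangular matrix is invertible iff its diagonal entries are units, so all four sets are
described entry by entry; matching the entry conditions gives `|𝓤| |𝓛| = |𝓓| · N`, where `N` is
the number of matrices whose diagonal entries are units. Hence `|𝓗| = N`, and
`N / |Mₙ(R)| = (|Rˣ| / |R|)ⁿ`. Finally, evaluation at `0` maps `R` onto `K` with nilpotent
kernel, so the units of `R` are the elements outside that kernel and `|Rˣ| / |R| = (q - 1) / q`.
-/

open Polynomial
open scoped Pointwise

theorem Nat.card_subtype_isUnit (M : Type*) [Monoid M] :
    Nat.card {a : M // IsUnit a} = Nat.card Mˣ :=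
  Nat.card_range_of_injective Units.val_injective

namespace Matrix

section Entrywise

variable {A ι : Type*}

theorem natCard_setOf_forall_entry {m n : Type*} [Fintype m] [Fintype n]
    (P : m → n → A → Prop) :
    Nat.card {M : Matrix m n A | ∀ i j, P i j (M i j)} = ∏ i, ∏ j, Nat.card {a // P i j a} := by
  have e : {M : Matrix m n A // ∀ i j, P i j (M i j)} ≃ ∀ i j, {a // P i j a} :=
    Equiv.subtypePiEquivPi.trans (Equiv.piCongrRight fun _ => Equiv.subtypePiEquivPi)
  rw [Set.coe_ofPred, Nat.card_congr e, Nat.card_pi]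
  simp only [Nat.card_pi]

theorem natCard_eq_prod {m n : Type*} [Fintype m] [Fintype n] :
    Nat.card (Matrix m n A) = ∏ _i : m, ∏ _j : n, Nat.card A := by
  rw [← Nat.card_congr Matrix.of, Nat.card_pi]
  simp only [Nat.card_pi]

variable (A ι) [Monoid A]

def unitDiagonal : Set (Matrix ι ι A) := {M | ∀ i, IsUnit (M i i)}

theorem unitDiagonal_eq_setOf :
    unitDiagonal A ι = {M | ∀ i j, i = j → IsUnit (M i j)} := by
  ext M
  simp only [unitDiagonal, Set.mem_ofPred_eq, forall_eq']

theorem natCard_unitDiagonal_eq_prod [Fintype ι] :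
    Nat.card (unitDiagonal A ι) = ∏ i : ι, ∏ j : ι, Nat.card {a : A // i = j → IsUnit a} := by
  rw [← natCard_setOf_forall_entry, unitDiagonal_eq_setOf]

theorem natCard_unitDiagonal_mul_pow [Fintype ι] :
    Nat.card (unitDiagonal A ι) * Nat.card A ^ Fintype.card ι =
      Nat.card (Matrix ι ι A) * Nat.card Aˣ ^ Fintype.card ι := by
  classical
  have hentry (i j : ι) :
      Nat.card {a : A // i = j → IsUnit a} * (if i = j then Nat.card A else 1) =
        Nat.card A * (if i = j then Nat.card Aˣ else 1) := by
    by_cases h : i = j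
    · simp [h, Nat.card_subtype_isUnit, mul_comm]
    · simp [h]
  have hprod := Finset.prod_congr rfl fun i (_ : i ∈ Finset.univ) =>
    Finset.prod_congr rfl fun j (_ : j ∈ Finset.univ) => hentry i j
  rw [natCard_unitDiagonal_eq_prod, natCard_eq_prod]
  simpa only [Finset.prod_mul_distrib, Finset.prod_ite_eq, Finset.mem_univ, if_true,
    Finset.prod_const, Finset.card_univ] using hprod

end Entrywise

section Triangular

variable {A ι : Type*} [CommRing A] [Fintype ι] [LinearOrder ι]

theorem IsUpperTriangular.isUnit_iff {M : Matrix ι ι A} (hM : M.IsUpperTriangular) :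
    IsUnit M ↔ ∀ i, IsUnit (M i i) := by
  rw [isUnit_iff_isUnit_det, det_of_isUpperTriangular hM, IsUnit.prod_univ_iff]

theorem IsLowerTriangular.isUnit_iff {M : Matrix ι ι A} (hM : M.IsLowerTriangular) :
    IsUnit M ↔ ∀ i, IsUnit (M i i) := by
  rw [isUnit_iff_isUnit_det, det_of_isLowerTriangular M hM, IsUnit.prod_univ_iff]

variable (A ι)

def upperTriangularUnits : Set (Matrix ι ι A) := {U | U.IsUpperTriangular ∧ IsUnit U}

def lowerTriangularUnits : Set (Matrix ι ι A) := {L | L.IsLowerTriangular ∧ IsUnit L}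

def diagonalUnits : Set (Matrix ι ι A) := {D | D.IsDiag ∧ IsUnit D}

variable {A ι}

theorem diagonal_mem_diagonalUnits {d : ι → A} (hd : ∀ i, IsUnit (d i)) :
    diagonal d ∈ diagonalUnits A ι :=
  ⟨isDiag_diagonal d, isUnit_diagonal.mpr (Pi.isUnit_iff.mpr hd)⟩

theorem eq_of_mul_eq_mul_of_diag_eq {U₁ U₂ L₁ L₂ : Matrix ι ι A}
    (hU₁ : U₁ ∈ upperTriangularUnits A ι) (hU₂ : U₂ ∈ upperTriangularUnits A ι)
    (hL₁ : L₁ ∈ lowerTriangularUnits A ι) (hL₂ : L₂ ∈ lowerTriangularUnits A ι)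
    (h : U₁ * L₁ = U₂ * L₂) (hd : L₁.diag = L₂.diag) : U₁ = U₂ ∧ L₁ = L₂ := by
  obtain ⟨_⟩ := hU₂.2.nonempty_invertible
  obtain ⟨_⟩ := hL₁.2.nonempty_invertible
  set M := U₂⁻¹ * U₁ with hM
  have hML : M * L₁ = L₂ := by
    rw [hM, Matrix.mul_assoc, h, inv_mul_cancel_left_of_invertible]
  have hM_upper : M.IsUpperTriangular :=
    (blockTriangular_inv_of_blockTriangular hU₂.1).mul hU₁.1
  have hM_lower : M.IsLowerTriangular := by
    rw [show M = L₂ * L₁⁻¹ by rw [← hML, mul_inv_cancel_right_of_invertible]]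
    exact hL₂.1.mul (blockTriangular_inv_of_blockTriangular hL₁.1)
  have hM_diag : M.IsDiag := fun i j hij =>
    hij.lt_or_gt.elim (fun hlt => hM_lower hlt) (fun hgt => hM_upper hgt)
  -- `M` is diagonal with `M i i * L₁ i i = L₂ i i = L₁ i i`, and `L₁ i i` is a unit.
  have hM_one : M = 1 := by
    rw [← hM_diag.diagonal_diag, ← diagonal_one]
    congr 1
    funext i
    have hi := congrFun₂ hML i i
    rw [← hM_diag.diagonal_diag, diagonal_mul, ← diag_apply L₂, ← hd, diag_apply] at hi
    exact (hL₁.1.isUnit_iff.mp hL₁.2 i).mul_eq_right.mp hi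
  have hU : U₂ * M = U₁ := mul_inv_cancel_left_of_invertible U₂ U₁
  rw [hM_one, Matrix.mul_one] at hU
  rw [hM_one, Matrix.one_mul] at hML
  exact ⟨hU.symm, hML⟩

theorem exists_mul_eq_mul_and_diag_eq {U L : Matrix ι ι A} (hU : U ∈ upperTriangularUnits A ι)
    (hL : L ∈ lowerTriangularUnits A ι) {d : ι → A} (hd : ∀ i, IsUnit (d i)) :
    ∃ U' ∈ upperTriangularUnits A ι, ∃ L' ∈ lowerTriangularUnits A ι,
      U' * L' = U * L ∧ L'.diag = d := by
  choose u hu using hd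
  choose l hl using hL.1.isUnit_iff.mp hL.2
  -- rescale by `T = diagonal (u / l)`: `U * L = (U * T⁻¹) * (T * L)`
  set t : ι → Aˣ := fun i => u i * (l i)⁻¹
  have ht : diagonal (fun i => (((t i)⁻¹ : Aˣ) : A)) * diagonal (fun i => (t i : A)) = 1 := by
    simp [diagonal_mul_diagonal]
  refine ⟨U * diagonal (fun i => (((t i)⁻¹ : Aˣ) : A)), ⟨hU.1.mul (blockTriangular_diagonal _), ?_⟩,
    diagonal (fun i => (t i : A)) * L, ⟨(blockTriangular_diagonal _).mul hL.1, ?_⟩, ?_, ?_⟩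
  · exact hU.2.mul (diagonal_mem_diagonalUnits fun i => (t i)⁻¹.isUnit).2
  · exact (diagonal_mem_diagonalUnits fun i => (t i).isUnit).2.mul hL.2
  · rw [Matrix.mul_assoc, ← Matrix.mul_assoc _ _ L, ht, Matrix.one_mul]
  · funext i
    simp [t, diagonal_mul, ← hu, ← hl]

theorem upperTriangularUnits_eq_setOf :
    upperTriangularUnits A ι = {M | ∀ i j, (j < i → M i j = 0) ∧ (i = j → IsUnit (M i j))} := by
  ext M
  simp only [upperTriangularUnits, Set.mem_ofPred_eq, forall_and, forall_eq']
  exact and_congr_right IsUpperTriangular.isUnit_iff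

theorem lowerTriangularUnits_eq_setOf :
    lowerTriangularUnits A ι = {M | ∀ i j, (i < j → M i j = 0) ∧ (i = j → IsUnit (M i j))} := by
  ext M
  simp only [lowerTriangularUnits, Set.mem_ofPred_eq, forall_and, forall_eq']
  exact and_congr_right IsLowerTriangular.isUnit_iff

theorem diagonalUnits_eq_setOf :
    diagonalUnits A ι = {M | ∀ i j, (i ≠ j → M i j = 0) ∧ (i = j → IsUnit (M i j))} := by
  ext M
  simp only [diagonalUnits, Set.mem_ofPred_eq, forall_and, forall_eq']
  exact and_congr_right fun hM => IsUpperTriangular.isUnit_iff fun _ _ h => hM h.ne'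

variable (A ι)

theorem natCard_upperTriangularUnits_eq_prod :
    Nat.card (upperTriangularUnits A ι) =
      ∏ i : ι, ∏ j : ι, Nat.card {a : A // (j < i → a = 0) ∧ (i = j → IsUnit a)} := by
  rw [← natCard_setOf_forall_entry, upperTriangularUnits_eq_setOf]

theorem natCard_lowerTriangularUnits_eq_prod :
    Nat.card (lowerTriangularUnits A ι) =
      ∏ i : ι, ∏ j : ι, Nat.card {a : A // (i < j → a = 0) ∧ (i = j → IsUnit a)} := by
  rw [← natCard_setOf_forall_entry, lowerTriangularUnits_eq_setOf]

theorem natCard_diagonalUnits_eq_prod :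
    Nat.card (diagonalUnits A ι) =
      ∏ i : ι, ∏ j : ι, Nat.card {a : A // (i ≠ j → a = 0) ∧ (i = j → IsUnit a)} := by
  rw [← natCard_setOf_forall_entry, diagonalUnits_eq_setOf]

theorem natCard_upperTriangularUnits_mul_natCard_lowerTriangularUnits :
    Nat.card (upperTriangularUnits A ι) * Nat.card (lowerTriangularUnits A ι) =
      Nat.card (diagonalUnits A ι) * Nat.card (unitDiagonal A ι) := by
  simp only [natCard_upperTriangularUnits_eq_prod, natCard_lowerTriangularUnits_eq_prod,
    natCard_diagonalUnits_eq_prod, natCard_unitDiagonal_eq_prod, ← Finset.prod_mul_distrib]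
  refine Finset.prod_congr rfl fun i _ => Finset.prod_congr rfl fun j _ => ?_
  -- in each of the three positions of `(i, j)` the four entry conditions match up in pairs
  rcases lt_trichotomy i j with h | rfl | h
  · simp [h, h.ne, h.not_gt, mul_comm]
  · simp
  · simp [h, h.ne', h.not_gt]

theorem natCard_upperTriangularUnits_mul_lowerTriangularUnits_mul_natCard_diagonalUnits :
    Nat.card ↥(upperTriangularUnits A ι * lowerTriangularUnits A ι) *
        Nat.card (diagonalUnits A ι) =
      Nat.card (upperTriangularUnits A ι) * Nat.card (lowerTriangularUnits A ι) := by
  rw [← Nat.card_prod, ← Nat.card_prod]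
  symm
  refine Nat.card_eq_of_bijective
    (fun p => (⟨p.1 * p.2, Set.mul_mem_mul p.1.2 p.2.2⟩,
      ⟨diagonal p.2.1.diag, diagonal_mem_diagonalUnits (p.2.2.1.isUnit_iff.mp p.2.2.2)⟩))
    ⟨fun ⟨U₁, L₁⟩ ⟨U₂, L₂⟩ h => ?_, fun ⟨⟨H, hH⟩, ⟨D, hD⟩⟩ => ?_⟩
  · simp only [Prod.mk.injEq, Subtype.mk.injEq] at h
    obtain ⟨hU, hL⟩ := eq_of_mul_eq_mul_of_diag_eq U₁.2 U₂.2 L₁.2 L₂.2 h.1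
      (diagonal_injective h.2)
    simp [Subtype.ext hU, Subtype.ext hL]
  · obtain ⟨U, hU, L, hL, rfl⟩ := Set.mem_mul.mp hH
    obtain ⟨U', hU', L', hL', hUL, hdiag⟩ := exists_mul_eq_mul_and_diag_eq hU hL
      ((IsUpperTriangular.isUnit_iff fun _ _ h => hD.1 h.ne').mp hD.2)
    refine ⟨(⟨U', hU'⟩, ⟨L', hL'⟩), Prod.ext (Subtype.ext hUL) (Subtype.ext ?_)⟩
    exact (congrArg diagonal hdiag).trans hD.1.diagonal_diag

theorem natCard_upperTriangularUnits_mul_lowerTriangularUnits [Finite A] :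
    Nat.card ↥(upperTriangularUnits A ι * lowerTriangularUnits A ι) =
      Nat.card (unitDiagonal A ι) := by
  have hD : Nat.card (diagonalUnits A ι) ≠ 0 :=
    Nat.card_ne_zero.mpr ⟨⟨⟨1, isDiag_one, isUnit_one⟩⟩, inferInstance⟩
  apply Nat.eq_of_mul_eq_mul_left (Nat.pos_of_ne_zero hD)
  rw [mul_comm, natCard_upperTriangularUnits_mul_lowerTriangularUnits_mul_natCard_diagonalUnits,
    natCard_upperTriangularUnits_mul_natCard_lowerTriangularUnits]

end Triangular

end Matrix

section NilpotentKernel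

variable {A F : Type*} [CommRing A] [Field F] {φ : A →+* F}

theorem isUnit_iff_map_ne_zero_of_isNilpotent_ker (hφ : Function.Surjective φ)
    (hker : ∀ a, φ a = 0 → IsNilpotent a) {a : A} : IsUnit a ↔ φ a ≠ 0 := by
  refine ⟨fun ha => (ha.map φ).ne_zero, fun ha => ?_⟩
  obtain ⟨b, hb⟩ := hφ (φ a)⁻¹
  have hab : IsNilpotent (a * b - 1) := hker _ (by simp [hb, ha])
  exact isUnit_of_mul_isUnit_left (sub_add_cancel (a * b) 1 ▸ hab.isUnit_add_one)

theorem natCard_units_mul_natCard_of_isNilpotent_ker [Finite A] (hφ : Function.Surjective φ)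
    (hker : ∀ a, φ a = 0 → IsNilpotent a) :
    Nat.card Aˣ * Nat.card F = Nat.card A * (Nat.card F - 1) := by
  classical
  have hA : Nat.card A = Nat.card {a // φ a = 0} * Nat.card F := by
    rw [← AddSubgroup.card_mul_index φ.toAddMonoidHom.ker, AddSubgroup.index_ker,
      AddMonoidHom.range_eq_top_of_surjective _ hφ, AddSubgroup.card_top]
    rfl
  have hunits : Nat.card {a // φ a = 0} + Nat.card Aˣ = Nat.card A := by
    rw [← Nat.card_subtype_isUnit, ← Nat.card_congr (Equiv.sumCompl fun a => φ a = 0),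
      Nat.card_sum, Nat.card_congr (Equiv.subtypeEquivRight
        fun _ => isUnit_iff_map_ne_zero_of_isNilpotent_ker hφ hker)]
  calc Nat.card Aˣ * Nat.card F
      = (Nat.card {a // φ a = 0} + Nat.card Aˣ) * Nat.card F -
          Nat.card {a // φ a = 0} * Nat.card F := by rw [add_mul, Nat.add_sub_cancel_left]
    _ = Nat.card A * (Nat.card F - 1) := by rw [hunits, ← hA, Nat.mul_sub_one]

end NilpotentKernel

theorem AdjoinRoot.natCard_eq {K : Type*} [Field K] {f : K[X]} (hf : f ≠ 0) :
    Nat.card (AdjoinRoot f) = Nat.card K ^ f.natDegree := by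
  rw [Nat.card_congr (AdjoinRoot.powerBasis hf).basis.equivFun.toEquiv, Nat.card_fun,
    Nat.card_eq_fintype_card (α := Fin _), Fintype.card_fin, AdjoinRoot.powerBasis_dim]

theorem natCard_units_quotient_span_X_pow_mul_natCard (K : Type*) [Field K] [Finite K] {m : ℕ}
    (hm : m ≠ 0) :
    Nat.card (K[X] ⧸ Ideal.span {(X : K[X]) ^ m})ˣ * Nat.card K =
      Nat.card (K[X] ⧸ Ideal.span {(X : K[X]) ^ m}) * (Nat.card K - 1) := by
  have : Finite (K[X] ⧸ Ideal.span {(X : K[X]) ^ m}) :=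
    .of_equiv _ (AdjoinRoot.powerBasis (pow_ne_zero m X_ne_zero)).basis.equivFun.toEquiv.symm
  have hX : ∀ p ∈ Ideal.span {(X : K[X]) ^ m}, evalRingHom 0 p = 0 := by
    intro p hp
    obtain ⟨c, rfl⟩ := Ideal.mem_span_singleton'.mp hp
    simp [hm]
  refine natCard_units_mul_natCard_of_isNilpotent_ker
    (φ := Ideal.Quotient.lift _ (evalRingHom 0) hX)
    (fun c => ⟨Ideal.Quotient.mk _ (C c), by simp⟩) ?_
  intro a ha
  obtain ⟨p, rfl⟩ := Ideal.Quotient.mk_surjective a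
  have hXp : X ∣ p := X_dvd_iff.mpr (by simpa [coeff_zero_eq_eval_zero] using ha)
  refine ⟨m, ?_⟩
  rw [← map_pow, Ideal.Quotient.eq_zero_iff_mem, Ideal.mem_span_singleton]
  exact pow_dvd_pow_of_dvd hXp m

theorem card_UL_image (K : Type*) [Field K] [Fintype K] (m n : ℕ) (hm : 1 ≤ m) :
    let R := Polynomial K ⧸ Ideal.span {(X : Polynomial K) ^ m}
    let q := Fintype.card K
    let 𝓗 : Set (Matrix (Fin n) (Fin n) R) :=
      {H | ∃ U L : Matrix (Fin n) (Fin n) R,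
        (∀ i j : Fin n, j < i → U i j = 0) ∧ IsUnit U ∧
        (∀ i j : Fin n, i < j → L i j = 0) ∧ IsUnit L ∧ U * L = H}
    let 𝓤 := {U : Matrix (Fin n) (Fin n) R //
        (∀ i j : Fin n, j < i → U i j = 0) ∧ IsUnit U}
    let 𝓛 := {L : Matrix (Fin n) (Fin n) R //
        (∀ i j : Fin n, i < j → L i j = 0) ∧ IsUnit L}
    let 𝓓 := {D : Matrix (Fin n) (Fin n) R //
        (∀ i j : Fin n, i ≠ j → D i j = 0) ∧ IsUnit D}
    Nat.card 𝓗 * Nat.card 𝓓 = Nat.card 𝓤 * Nat.card 𝓛 ∧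
    Nat.card 𝓗 * q ^ n = q ^ (m * n ^ 2) * (q - 1) ^ n := by
  intro R q 𝓗 𝓤 𝓛 𝓓
  have h𝓗 :
      𝓗 = Matrix.upperTriangularUnits R (Fin n) * Matrix.lowerTriangularUnits R (Fin n) := by
    ext H
    constructor
    · rintro ⟨U, L, hU, hUu, hL, hLu, rfl⟩
      exact Set.mul_mem_mul ⟨hU, hUu⟩ ⟨hL, hLu⟩
    · rintro ⟨U, ⟨hU, hUu⟩, L, ⟨hL, hLu⟩, rfl⟩
      exact ⟨U, L, hU, hUu, hL, hLu, rfl⟩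
  have hR : Nat.card R = q ^ m := by
    have h := AdjoinRoot.natCard_eq (pow_ne_zero m (X_ne_zero (R := K)))
    rwa [natDegree_X_pow, Nat.card_eq_fintype_card (α := K)] at h
  have hRq : Nat.card Rˣ * q = Nat.card R * (q - 1) := by
    show _ * Fintype.card K = _ * (Fintype.card K - 1)
    simpa only [Nat.card_eq_fintype_card] using
      natCard_units_quotient_span_X_pow_mul_natCard K (Nat.one_le_iff_ne_zero.mp hm)
  have hq : 0 < q := Fintype.card_pos
  have : Finite R := Nat.finite_of_card_ne_zero (by rw [hR]; positivity)
  constructor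
  · rw [h𝓗]
    exact
      Matrix.natCard_upperTriangularUnits_mul_lowerTriangularUnits_mul_natCard_diagonalUnits _ _
  have hcount := Matrix.natCard_unitDiagonal_mul_pow R (Fin n)
  rw [← Matrix.natCard_upperTriangularUnits_mul_lowerTriangularUnits, ← h𝓗,
    Matrix.natCard_eq_prod] at hcount
  simp only [Finset.prod_const, Finset.card_univ, Fintype.card_fin, hR] at hcount
  apply Nat.eq_of_mul_eq_mul_right (pow_pos (pow_pos hq m) n)
  calc Nat.card 𝓗 * q ^ n * (q ^ m) ^ n = (Nat.card 𝓗 * (q ^ m) ^ n) * q ^ n := by ring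
    _ = ((q ^ m) ^ n) ^ n * (Nat.card Rˣ * q) ^ n := by rw [hcount]; ring
    _ = q ^ (m * n ^ 2) * (q - 1) ^ n * (q ^ m) ^ n := by rw [hRq, hR]; ring
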